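/- Let K be a field of characteristic 0 and let R ∈ K(X) have (in lowest terms) monic denominator D admitting a shiftless decomposition D = ∏_{i=1}^v ∏_{j=1}^{n_i} Q_i(X+h_{i,j})^{e_{i,j}}, where the Q_i are monic squarefree nonconstant polynomials with gcd(Q_i(X+k), Q_j(X)) = 1 for all i, j and all k ∈ ℤ unless i = j and k = 0. Then R decomposes as R = P_∞ + u_1 + … + u_v with P_∞ ∈ K[X] and u_i ∈ K_{Q_i}(X) for each i. -/

import Mathlib

open Polynomial

/-- For a nonconstant polynomial `Q ∈ K[X]`, `KQspan K Q` is the `K`-linear span in `K(X)`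
of the fractions `X^ℓ / Q(X+h)^j` with `h ∈ ℤ`, `j ≥ 1` and `0 ≤ ℓ < j·deg Q`. -/
noncomputable def KQspan (K : Type*) [Field K] (Q : Polynomial K) :
    Submodule K (RatFunc K) :=
  Submodule.span K { f : RatFunc K | ∃ (h : ℤ) (j ℓ : ℕ), 1 ≤ j ∧ ℓ < j * Q.natDegree ∧
    f = algebraMap (Polynomial K) (RatFunc K) (X ^ ℓ) /
        algebraMap (Polynomial K) (RatFunc K) ((Q.comp (X + C (h : K))) ^ j) }

section PF

variable {R : Type*} [CommRing R] [IsDomain R]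
variable (K : Type*) [Field K] [Algebra R[X] K] [IsFractionRing R[X] K]

open scoped algebraMap
open algebraMap

/-- Universe-polymorphic version of `div_eq_quo_add_rem_div_add_rem_div`. -/
theorem my_div_eq_quo_add_rem_div_add_rem_div (f : R[X]) {g₁ g₂ : R[X]} (hg₁ : g₁.Monic)
    (hg₂ : g₂.Monic) (hcoprime : IsCoprime g₁ g₂) :
    ∃ q r₁ r₂ : R[X],
      r₁.degree < g₁.degree ∧
        r₂.degree < g₂.degree ∧ (f : K) / (↑g₁ * ↑g₂) = ↑q + ↑r₁ / ↑g₁ + ↑r₂ / ↑g₂ := by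
  rcases hcoprime with ⟨c, d, hcd⟩
  refine
    ⟨f * d /ₘ g₁ + f * c /ₘ g₂, f * d %ₘ g₁, f * c %ₘ g₂, degree_modByMonic_lt _ hg₁,
      degree_modByMonic_lt _ hg₂, ?_⟩
  have hg₁' : (↑g₁ : K) ≠ 0 := by
    norm_cast
    exact hg₁.ne_zero
  have hg₂' : (↑g₂ : K) ≠ 0 := by
    norm_cast
    exact hg₂.ne_zero
  have hfc := modByMonic_add_div (f * c) g₂
  have hfd := modByMonic_add_div (f * d) g₁
  field_simp
  norm_cast
  linear_combination -1 * f * hcd + -1 * g₁ * hfc + -1 * g₂ * hfd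

/-- Universe-polymorphic version of `div_eq_quo_add_sum_rem_div`. -/
theorem my_div_eq_quo_add_sum_rem_div (f : R[X]) {ι : Type*} {g : ι → R[X]} {s : Finset ι}
    (hg : ∀ i ∈ s, (g i).Monic) (hcop : Set.Pairwise ↑s fun i j => IsCoprime (g i) (g j)) :
    ∃ (q : R[X]) (r : ι → R[X]),
      (∀ i ∈ s, (r i).degree < (g i).degree) ∧
        ((↑f : K) / ∏ i ∈ s, ↑(g i)) = ↑q + ∑ i ∈ s, (r i : K) / (g i : K) := by
  classical
  induction' s using Finset.induction_on with a b hab Hind f generalizing f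
  · refine ⟨f, fun _ : ι => (0 : R[X]), fun i => ?_, by simp⟩
    rintro ⟨⟩
  obtain ⟨q₀, r₁, r₂, hdeg₁, _, hf : (↑f : K) / _ = _⟩ :=
    my_div_eq_quo_add_rem_div_add_rem_div K f
      (hg a (b.mem_insert_self a) : Monic (g a))
      (monic_prod_of_monic _ _ fun i hi => hg i (Finset.mem_insert_of_mem hi) :
        Monic (∏ i ∈ b, g i))
      (IsCoprime.prod_right fun i hi =>
        hcop (Finset.mem_coe.2 (b.mem_insert_self a))
          (Finset.mem_coe.2 (Finset.mem_insert_of_mem hi)) (by rintro rfl; exact hab hi))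
  obtain ⟨q, r, hrdeg, IH⟩ :=
    Hind _ (fun i hi => hg i (Finset.mem_insert_of_mem hi))
      (Set.Pairwise.mono (Finset.coe_subset.2 fun i hi => Finset.mem_insert_of_mem hi) hcop)
  refine ⟨q₀ + q, fun i => if i = a then r₁ else r i, ?_, ?_⟩
  · intro i
    dsimp only
    split_ifs with h1
    · cases h1
      intro
      exact hdeg₁
    · intro hi
      exact hrdeg i (Finset.mem_of_mem_insert_of_ne hi h1)
  norm_cast at hf IH ⊢
  rw [Finset.prod_insert hab, hf, IH, Finset.sum_insert hab, if_pos rfl]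
  trans (↑(q₀ + q : R[X]) : K) + (↑r₁ / ↑(g a) + ∑ i ∈ b, (r i : K) / (g i : K))
  · push_cast
    ring
  congr 2
  refine Finset.sum_congr rfl fun x hxb => ?_
  rw [if_neg]
  rintro rfl
  exact hab hxb

end PF

/-- A fraction `r / Q(X+c)^j` with `deg r < j·deg Q` lies in `KQspan K Q`. -/
theorem mem_KQspan_of_degree_lt {K : Type*} [Field K] (Q : Polynomial K) (hdQ : 0 < Q.natDegree)
    (c : ℤ) {j : ℕ} (hj : 1 ≤ j) (r : Polynomial K)
    (hr : r.degree < (((Q.comp (X + C (c : K))) ^ j)).degree) :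
    algebraMap (Polynomial K) (RatFunc K) r /
      algebraMap (Polynomial K) (RatFunc K) ((Q.comp (X + C (c : K))) ^ j) ∈ KQspan K Q := by
  have hmono : ((Q.comp (X + C (c : K))) ^ j).natDegree = j * Q.natDegree := by
    rw [natDegree_pow, natDegree_comp, natDegree_X_add_C, mul_one]
  have hpos : 0 < j * Q.natDegree := Nat.mul_pos hj hdQ
  have hrd : r.natDegree < j * Q.natDegree := by
    rcases eq_or_ne r 0 with rfl | hr0
    · simpa using hpos
    · rw [← hmono]
      rw [Polynomial.natDegree_lt_iff_degree_lt hr0]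
      rw [← Polynomial.degree_eq_natDegree]
      · exact hr
      · intro h0
        rw [h0] at hr
        exact absurd hr (by simp)
  nth_rewrite 1 [r.as_sum_range' _ hrd]
  rw [map_sum, Finset.sum_div]
  refine Submodule.sum_mem _ fun ℓ hℓ => ?_
  rw [← C_mul_X_pow_eq_monomial, map_mul, mul_div_assoc]
  have hC : (algebraMap (Polynomial K) (RatFunc K)) (C (r.coeff ℓ)) =
      algebraMap K (RatFunc K) (r.coeff ℓ) := by
    rw [IsScalarTower.algebraMap_apply K (Polynomial K) (RatFunc K), Polynomial.algebraMap_eq]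
  rw [hC, ← Algebra.smul_def]
  refine Submodule.smul_mem _ _ (Submodule.subset_span ?_)
  exact ⟨c, j, ℓ, hj, Finset.mem_range.mp hℓ, rfl⟩

theorem isCoprime_comp_X_add_C {K : Type*} [Field K] {p q : Polynomial K}
    (hpq : IsCoprime p q) (c : K) : IsCoprime (p.comp (X + C c)) (q.comp (X + C c)) := by
  rcases hpq with ⟨a, b, hab⟩
  exact ⟨a.comp (X + C c), b.comp (X + C c), by
    rw [← mul_comp, ← mul_comp, ← add_comp, hab, one_comp]⟩

/-- Partial fraction decomposition adapted to a shiftless decomposition of the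
denominator: if the denominator of `R ∈ K(X)` factors as
`∏_{i=1}^v ∏_{j=1}^{n_i} Q_i(X+h_{i,j})^{e_{i,j}}` with the `Q_i` monic squarefree
nonconstant and pairwise shift-coprime, then `R = P_∞ + u_1 + … + u_v` with
`P_∞ ∈ K[X]` and `u_i ∈ K_{Q_i}(X)`. -/
theorem partial_fraction_shiftless (K : Type*) [Field K] [CharZero K]
    (R : RatFunc K) (v : ℕ) (Q : Fin v → Polynomial K)
    (n : Fin v → ℕ) (h : (i : Fin v) → Fin (n i) → ℤ)
    (e : (i : Fin v) → Fin (n i) → ℕ)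
    (hmonic : ∀ i, (Q i).Monic)
    (hsf : ∀ i, Squarefree (Q i))
    (hdeg : ∀ i, 0 < (Q i).natDegree)
    (he : ∀ i j, 1 ≤ e i j)
    (hdenom : R.denom = ∏ i, ∏ j, ((Q i).comp (X + C ((h i j : ℤ) : K))) ^ (e i j))
    (hcop : ∀ i j : Fin v, ∀ k : ℤ, ¬(i = j ∧ k = 0) →
      IsCoprime ((Q i).comp (X + C (k : K))) (Q j)) :
    ∃ (P : Polynomial K) (u : Fin v → RatFunc K),
      (∀ i, u i ∈ KQspan K (Q i)) ∧
      R = algebraMap (Polynomial K) (RatFunc K) P + ∑ i, u i := by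
  classical
  -- the distinct shift values for each `i`
  set T : (i : Fin v) → Finset ℤ := fun i => Finset.univ.image (h i) with hT
  -- the total exponent of the shift `c` for the polynomial `Q i`
  set E : Fin v → ℤ → ℕ :=
    fun i c => ∑ j ∈ Finset.univ.filter (fun j => h i j = c), e i j with hEdef
  set g : ((i : Fin v) × ℤ) → Polynomial K :=
    fun σ => ((Q σ.1).comp (X + C ((σ.2 : ℤ) : K))) ^ (E σ.1 σ.2) with hg
  set s : Finset ((i : Fin v) × ℤ) := Finset.univ.sigma T with hs
  have hE : ∀ i, ∀ c ∈ T i, 1 ≤ E i c := by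
    intro i c hc
    obtain ⟨j, -, rfl⟩ := Finset.mem_image.mp hc
    calc 1 ≤ e i j := he i j
      _ ≤ E i (h i j) := Finset.single_le_sum (fun _ _ => Nat.zero_le _)
          (Finset.mem_filter.mpr ⟨Finset.mem_univ _, rfl⟩)
  have hgmonic : ∀ σ ∈ s, (g σ).Monic :=
    fun σ _ => ((hmonic σ.1).comp_X_add_C _).pow _
  -- the denominator is the product of the `g σ`
  have hdenom' : R.denom = ∏ σ ∈ s, g σ := by
    rw [hdenom, hs, Finset.prod_sigma]
    refine Finset.prod_congr rfl fun i _ => ?_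
    rw [← Finset.prod_fiberwise_of_maps_to
      (fun j _ => Finset.mem_image_of_mem (h i) (Finset.mem_univ j))
      (fun j => ((Q i).comp (X + C ((h i j : ℤ) : K))) ^ (e i j))]
    refine Finset.prod_congr rfl fun c _ => ?_
    show _ = ((Q i).comp (X + C ((c : ℤ) : K))) ^ (E i c)
    rw [hEdef, ← Finset.prod_pow_eq_pow_sum]
    refine Finset.prod_congr rfl fun j hj => ?_
    rw [(Finset.mem_filter.mp hj).2]
  -- shifted coprimality
  have hbase : ∀ (i i' : Fin v) (c c' : ℤ), ¬(i = i' ∧ c = c') →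
      IsCoprime ((Q i).comp (X + C ((c : ℤ) : K))) ((Q i').comp (X + C ((c' : ℤ) : K))) := by
    intro i i' c c' hne
    have h1 := hcop i i' (c - c') (fun ⟨ha, hb⟩ => hne ⟨ha, by omega⟩)
    have h2 := isCoprime_comp_X_add_C h1 ((c' : ℤ) : K)
    rwa [comp_assoc, add_comp, X_comp, C_comp, add_assoc, ← C_add,
      show ((c' : ℤ) : K) + (((c - c' : ℤ) : ℤ) : K) = ((c : ℤ) : K) by push_cast; ring] at h2
  have hpair : Set.Pairwise ↑s fun σ τ => IsCoprime (g σ) (g τ) := by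
    rintro ⟨i, c⟩ - ⟨i', c'⟩ - hst
    refine IsCoprime.pow (hbase i i' c c' ?_)
    rintro ⟨rfl, rfl⟩
    exact hst rfl
  obtain ⟨q, r, hrdeg, heq⟩ := my_div_eq_quo_add_sum_rem_div (RatFunc K) R.num hgmonic hpair
  refine ⟨q, fun i => ∑ c ∈ T i,
      algebraMap (Polynomial K) (RatFunc K) (r ⟨i, c⟩) /
        algebraMap (Polynomial K) (RatFunc K) (g ⟨i, c⟩), fun i => ?_, ?_⟩
  · refine Submodule.sum_mem _ fun c hc => ?_
    have hcs : (⟨i, c⟩ : (i : Fin v) × ℤ) ∈ s := by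
      rw [hs]; exact Finset.mem_sigma.mpr ⟨Finset.mem_univ _, hc⟩
    exact mem_KQspan_of_degree_lt (Q i) (hdeg i) c (hE i c hc) _ (hrdeg _ hcs)
  · rw [← R.num_div_denom, hdenom', map_prod, heq, Finset.sum_sigma]
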